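/- Let Act be a finite nonempty set, for each α ∈ Act let E_α be a trace-preserving super-operator on d×d complex matrices, and let p_1, …, p_t be projections; set φ = range(p_1) ∪ ⋯ ∪ range(p_t) ⊆ ℂ^d. Then there exists a set ψ ⊆ ℂ^d which is a finite union of linear subspaces such that for every density matrix σ₀ the following are equivalent: (i) for every k ≥ 0 and every word α₁⋯α_k ∈ Act^k, supp(E_{α_k} ∘ ⋯ ∘ E_{α_1}(σ₀)) ⊆ φ; (ii) supp(σ₀) ⊆ ψ. (This set ψ witnesses the decidability of the invariance property □φ.) -/

import Mathlib

/-!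
For a positive semidefinite `σ`, `supp (E σ) = ⨆ i, E_i (supp σ)`, so the property only depends on
the subspace `supp σ₀` and on the monotone maps `V ↦ ⨆ i, E_i V`, which have the upper adjoints
`W ↦ ⨅ i, E_i⁻¹ W`. Backward induction along these adjoints shows that the subspaces all of whose
images under words of length `≤ n` lie inside one of the `range p_j` are exactly those below one of
finitely many subspaces; by subspace avoidance over the infinite field `ℂ`, they are the subspaces
contained in a finite union of subspaces `ψ_n`. The sets `ψ_n` decrease, and each is the zero
locus of its vanishing ideal, so Hilbert's basis theorem makes the chain stabilize at some `ψ_N`,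
which is the required `ψ`.
-/

open Matrix ComplexOrder

/-- The super-operator with Kraus operators `(E_i)`: `ρ ↦ Σ_i E_i ρ E_iᴴ`. -/
noncomputable def superOp {d : ℕ} {I : Type} [Fintype I]
    (E : I → Matrix (Fin d) (Fin d) ℂ) (ρ : Matrix (Fin d) (Fin d) ℂ) :
    Matrix (Fin d) (Fin d) ℂ :=
  ∑ i, E i * ρ * (E i)ᴴ

/-- A set is a finite union of linear subspaces. -/
def IsFinUnionSubspaces {d : ℕ} (X : Set (Fin d → ℂ)) : Prop :=
  ∃ (m : ℕ) (V : Fin m → Submodule ℂ (Fin d → ℂ)), X = ⋃ i, (V i : Set (Fin d → ℂ))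


namespace Submodule

variable {K M : Type*} [Field K] [Infinite K] [AddCommGroup M] [Module K M]

theorem exists_le_of_coe_subset_iUnion {ι : Type*} [Finite ι] {W : Submodule K M}
    {V : ι → Submodule K M} (h : (W : Set M) ⊆ ⋃ i, (V i : Set M)) : ∃ i, W ≤ V i := by
  by_contra! hW
  obtain ⟨x, hx⟩ := exists_forall_notMem_of_forall_ne_top (fun i => (V i).comap W.subtype)
    fun i htop => hW i (comap_subtype_eq_top.mp htop)
  obtain ⟨i, hi⟩ := Set.mem_iUnion.mp (h x.2)
  exact hx i hi

theorem coe_subset_biUnion_iff_mem_lowerClosure {S : Set (Submodule K M)} (hS : S.Finite)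
    {W : Submodule K M} :
    (W : Set M) ⊆ ⋃ V ∈ S, (V : Set M) ↔ W ∈ lowerClosure S := by
  rw [mem_lowerClosure]
  constructor
  · intro h
    have := hS.to_subtype
    obtain ⟨⟨V, hV⟩, hWV⟩ := exists_le_of_coe_subset_iUnion (V := fun V : S => (V : Submodule K M))
      (by rwa [Set.biUnion_eq_iUnion] at h)
    exact ⟨V, hV, hWV⟩
  · rintro ⟨V, hV, hWV⟩ x hx
    exact Set.mem_biUnion hV (hWV hx)

end Submodule

namespace MvPolynomial

variable {K σ : Type*} [Field K] [Fintype σ]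

theorem exists_eval_eq_dual (f : Module.Dual K (σ → K)) :
    ∃ q : MvPolynomial σ K, ∀ x, eval x q = f x := by
  classical
  exact ⟨(LinearMap.toMatrix' (LinearMap.pi fun _ : Unit => f)).toMvPolynomial (), fun x => by
    rw [Matrix.toMvPolynomial_eval_eq_apply, LinearMap.toMatrix'_mulVec, LinearMap.pi_apply]⟩

theorem zeroLocus_vanishingIdeal_iUnion_submodule {ι : Type*} [Finite ι]
    (V : ι → Submodule K (σ → K)) :
    zeroLocus K (vanishingIdeal K (⋃ i, (V i : Set (σ → K)))) = ⋃ i, (V i : Set (σ → K)) := by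
  refine le_antisymm (fun x hx => ?_) (zeroLocus_vanishingIdeal_le _)
  by_contra hxV
  simp only [Set.mem_iUnion, SetLike.mem_coe, not_exists] at hxV
  have hsep (i : ι) : ∃ q : MvPolynomial σ K, eval x q ≠ 0 ∧ ∀ v ∈ V i, eval v q = 0 := by
    obtain ⟨f, hfx, hfV⟩ := (V i).exists_dual_map_eq_bot_of_notMem (hxV i) inferInstance
    obtain ⟨q, hq⟩ := exists_eval_eq_dual f
    refine ⟨q, by rwa [hq], fun v hv => ?_⟩
    rw [hq]
    exact LinearMap.le_ker_iff_map.mpr hfV hv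
  choose q hqx hqV using hsep
  have := Fintype.ofFinite ι
  have hmem : ∏ i, q i ∈ vanishingIdeal K (⋃ i, (V i : Set (σ → K))) := by
    simp only [mem_vanishingIdeal_iff, Set.mem_iUnion, SetLike.mem_coe, aeval_eq_eval]
    rintro v ⟨i, hv⟩
    rw [map_prod]
    exact Finset.prod_eq_zero (Finset.mem_univ i) (hqV i v hv)
  have hx := hx _ hmem
  rw [aeval_eq_eval, map_prod] at hx
  exact Finset.prod_ne_zero_iff.mpr (fun i _ => hqx i) hx

end MvPolynomial

namespace IsFinUnionSubspaces

open MvPolynomial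

variable {d : ℕ}

theorem of_biUnion {S : Set (Submodule ℂ (Fin d → ℂ))} (hS : S.Finite) :
    IsFinUnionSubspaces (⋃ V ∈ S, (V : Set (Fin d → ℂ))) := by
  obtain ⟨m, f, rfl⟩ := hS.fin_embedding
  exact ⟨m, f, Set.biUnion_range⟩

theorem zeroLocus_vanishingIdeal {X : Set (Fin d → ℂ)} (hX : IsFinUnionSubspaces X) :
    zeroLocus ℂ (vanishingIdeal ℂ X) = X := by
  obtain ⟨m, V, rfl⟩ := hX
  exact zeroLocus_vanishingIdeal_iUnion_submodule V

-- A finite union of subspaces is Zariski closed, so Hilbert's basis theorem applies.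
theorem antitone_stabilizes {X : ℕ → Set (Fin d → ℂ)} (hX : ∀ n, IsFinUnionSubspaces (X n))
    (hanti : Antitone X) : ∃ N, ∀ n, N ≤ n → X n = X N := by
  obtain ⟨N, hN⟩ := WellFoundedGT.monotone_chain_condition
    ⟨fun n => vanishingIdeal ℂ (X n), fun _ _ h => vanishingIdeal_anti_mono (hanti h)⟩
  refine ⟨N, fun n hn => ?_⟩
  rw [← (hX n).zeroLocus_vanishingIdeal, ← (hX N).zeroLocus_vanishingIdeal]
  exact congrArg _ (hN n hn).symm

end IsFinUnionSubspaces

namespace Matrix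

variable {m n R : Type*} [Fintype m] [Fintype n]
  [Field R] [PartialOrder R] [StarRing R] [StarOrderedRing R]

theorem range_mulVecLin_mul_conjTranspose (A : Matrix m n R) :
    LinearMap.range (A * Aᴴ).mulVecLin = LinearMap.range A.mulVecLin := by
  refine Submodule.eq_of_le_of_finrank_le ?_ (rank_self_mul_conjTranspose A).ge
  rw [mulVecLin_mul]
  exact LinearMap.range_comp_le_range _ _

theorem range_mulVecLin_sum_mul_conjTranspose {ι : Type*} [Fintype ι] (A : ι → Matrix m n R) :
    LinearMap.range (∑ i, A i * (A i)ᴴ).mulVecLin = ⨆ i, LinearMap.range (A i).mulVecLin := by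
  let C : Matrix m (ι × n) R := of fun r c => A c.1 r c.2
  have hC : C * Cᴴ = ∑ i, A i * (A i)ᴴ := by
    ext r s
    simp [C, mul_apply, sum_apply, Fintype.sum_prod_type]
  have hcols : Set.range C.col = ⋃ i, Set.range (A i).col := by
    ext v
    simp only [Set.mem_range, Set.mem_iUnion]
    exact ⟨fun ⟨⟨i, c⟩, hv⟩ => ⟨i, c, hv⟩, fun ⟨i, c, hv⟩ => ⟨(i, c), hv⟩⟩
  rw [← hC, range_mulVecLin_mul_conjTranspose, range_mulVecLin, hcols, Submodule.span_iUnion]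
  simp_rw [range_mulVecLin]

end Matrix

section Kraus

open scoped MatrixOrder

variable {d : ℕ} {I : Type} (E : I → Matrix (Fin d) (Fin d) ℂ)

noncomputable def krausImage (V : Submodule ℂ (Fin d → ℂ)) : Submodule ℂ (Fin d → ℂ) :=
  ⨆ i, V.map (E i).mulVecLin

theorem gc_krausImage :
    GaloisConnection (krausImage E) fun W => ⨅ i, W.comap (E i).mulVecLin := fun V W => by
  simp only [krausImage, iSup_le_iff, le_iInf_iff, Submodule.map_le_iff_le_comap]

theorem Matrix.PosSemidef.superOp [Fintype I] {σ : Matrix (Fin d) (Fin d) ℂ} (hσ : σ.PosSemidef) :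
    (superOp E σ).PosSemidef :=
  posSemidef_sum _ fun i _ => hσ.mul_mul_conjTranspose_same (E i)

theorem range_superOp [Fintype I] {σ : Matrix (Fin d) (Fin d) ℂ} (hσ : σ.PosSemidef) :
    LinearMap.range (superOp E σ).mulVecLin = krausImage E (LinearMap.range σ.mulVecLin) := by
  obtain ⟨B, rfl⟩ : ∃ B : Matrix (Fin d) (Fin d) ℂ, σ = B * Bᴴ := by
    obtain ⟨B, rfl⟩ := CStarAlgebra.nonneg_iff_eq_star_mul_self.mp hσ.nonneg
    exact ⟨Bᴴ, by rw [conjTranspose_conjTranspose]; rfl⟩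
  have hsum : superOp E (B * Bᴴ) = ∑ i, (E i * B) * (E i * B)ᴴ := by
    simp only [superOp, conjTranspose_mul, Matrix.mul_assoc]
  rw [hsum, range_mulVecLin_sum_mul_conjTranspose, range_mulVecLin_mul_conjTranspose, krausImage]
  simp_rw [mulVecLin_mul, LinearMap.range_comp]

theorem range_foldl_superOp {Act : Type*} {I : Act → Type} [∀ α, Fintype (I α)]
    (E : (α : Act) → I α → Matrix (Fin d) (Fin d) ℂ) (w : List Act)
    {σ : Matrix (Fin d) (Fin d) ℂ} (hσ : σ.PosSemidef) :
    LinearMap.range (w.foldl (fun ρ α => superOp (E α) ρ) σ).mulVecLin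
      = w.foldl (fun V α => krausImage (E α) V) (LinearMap.range σ.mulVecLin) := by
  induction w generalizing σ with
  | nil => rfl
  | cons α w ih =>
    rw [List.foldl_cons, List.foldl_cons, ih (hσ.superOp (E α)), range_superOp (E α) hσ]

end Kraus

section Safety

variable {L Act : Type*} [Preorder L] (f : Act → L → L) (Φ : Set L)

def IsSafeUpTo (n : ℕ) (x : L) : Prop :=
  ∀ w : List Act, w.length ≤ n → w.foldl (fun y α => f α y) x ∈ lowerClosure Φ

variable {f Φ}

theorem isSafeUpTo_zero {x : L} : IsSafeUpTo f Φ 0 x ↔ x ∈ lowerClosure Φ :=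
  ⟨fun h => h [] le_rfl, fun h w hw => by
    rwa [List.length_eq_zero_iff.mp (Nat.le_zero.mp hw)]⟩

theorem isSafeUpTo_succ {n : ℕ} {x : L} :
    IsSafeUpTo f Φ (n + 1) x ↔ x ∈ lowerClosure Φ ∧ ∀ α, IsSafeUpTo f Φ n (f α x) := by
  refine ⟨fun h => ⟨h [] (Nat.zero_le _), fun α w hw => h (α :: w) (Nat.succ_le_succ hw)⟩, ?_⟩
  rintro ⟨h₀, h⟩ (_ | ⟨α, w⟩) hw
  · exact h₀
  · exact h α w (Nat.le_of_succ_le_succ hw)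

theorem antitone_isSafeUpTo : Antitone (IsSafeUpTo f Φ) :=
  fun _ _ hmn _ h w hw => h w (hw.trans hmn)

theorem forall_isSafeUpTo_iff {x : L} :
    (∀ n, IsSafeUpTo f Φ n x) ↔ ∀ w : List Act, w.foldl (fun y α => f α y) x ∈ lowerClosure Φ :=
  ⟨fun h w => h w.length w le_rfl, fun h _ w _ => h w⟩

end Safety

-- By the Galois connections, `x` is `(n+1)`-safe iff `x ≤ y ⊓ ⨅ α, g α (s α)` for some `y ∈ Φ`
-- and bounds `s α ∈ S` of the `n`-safe elements.
theorem exists_finite_isSafeUpTo_iff {L Act : Type*} [CompleteLattice L] [Finite Act]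
    {f g : Act → L → L} (hfg : ∀ α, GaloisConnection (f α) (g α)) {Φ : Set L} (hΦ : Φ.Finite)
    (n : ℕ) : ∃ S : Set L, S.Finite ∧ ∀ x, IsSafeUpTo f Φ n x ↔ x ∈ lowerClosure S := by
  induction n with
  | zero => exact ⟨Φ, hΦ, fun x => isSafeUpTo_zero⟩
  | succ n ih =>
    obtain ⟨S, hS, hsafe⟩ := ih
    have := hΦ.to_subtype
    have := hS.to_subtype
    refine ⟨Set.range fun yc : Φ × (Act → S) => (yc.1 : L) ⊓ ⨅ α, g α (yc.2 α),
      Set.finite_range _, fun x => ?_⟩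
    simp only [isSafeUpTo_succ, hsafe, mem_lowerClosure, (hfg _).le_iff_le, Set.exists_range_iff,
      le_inf_iff, le_iInf_iff, Prod.exists, Subtype.exists]
    constructor
    · rintro ⟨⟨y, hy, hxy⟩, h⟩
      choose s hs hxs using h
      exact ⟨y, hy, fun α => ⟨s α, hs α⟩, hxy, hxs⟩
    · rintro ⟨y, hy, s, hxy, hxs⟩
      exact ⟨⟨y, hy, hxy⟩, fun α => ⟨s α, (s α).2, hxs α⟩⟩

theorem exists_isFinUnionSubspaces_forall_iff {d : ℕ}
    {P : ℕ → Submodule ℂ (Fin d → ℂ) → Prop} (hP : Antitone P)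
    (hfin : ∀ n, ∃ S : Set (Submodule ℂ (Fin d → ℂ)), S.Finite ∧ ∀ W, P n W ↔ W ∈ lowerClosure S) :
    ∃ ψ : Set (Fin d → ℂ), IsFinUnionSubspaces ψ ∧
      ∀ W : Submodule ℂ (Fin d → ℂ), (∀ n, P n W) ↔ (W : Set (Fin d → ℂ)) ⊆ ψ := by
  choose S hSfin hS using hfin
  set ψ : ℕ → Set (Fin d → ℂ) := fun n => ⋃ V ∈ S n, (V : Set (Fin d → ℂ))
  have hψ (n : ℕ) (W : Submodule ℂ (Fin d → ℂ)) : P n W ↔ (W : Set (Fin d → ℂ)) ⊆ ψ n :=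
    (hS n W).trans (Submodule.coe_subset_biUnion_iff_mem_lowerClosure (hSfin n)).symm
  have hmem (n : ℕ) (v : Fin d → ℂ) : v ∈ ψ n ↔ P n (Submodule.span ℂ {v}) := by
    simp [ψ, hS, mem_lowerClosure, Submodule.span_singleton_le_iff_mem]
  have hψ_anti : Antitone ψ := fun m n hmn v => by
    simp only [hmem]
    exact hP hmn _
  obtain ⟨N, hN⟩ : ∃ N, ∀ n, N ≤ n → ψ n = ψ N :=
    IsFinUnionSubspaces.antitone_stabilizes (fun n => .of_biUnion (hSfin n)) hψ_anti
  refine ⟨ψ N, .of_biUnion (hSfin N), fun W => ⟨fun h => (hψ N W).1 (h N), fun h n => ?_⟩⟩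
  refine hP (le_max_left n N) W ((hψ _ W).2 ?_)
  rwa [hN _ (le_max_right n N)]

theorem invariance_characterized_by_fin_union_subspaces_general
    {d : ℕ} {Act : Type} [Fintype Act]
    {I : Act → Type} [∀ α, Fintype (I α)]
    (E : (α : Act) → I α → Matrix (Fin d) (Fin d) ℂ)
    {t : ℕ} (p : Fin t → Matrix (Fin d) (Fin d) ℂ)
    (φ : Set (Fin d → ℂ))
    (hφ : φ = ⋃ i, (LinearMap.range (p i).mulVecLin : Set (Fin d → ℂ))) :
    ∃ ψ : Set (Fin d → ℂ), IsFinUnionSubspaces ψ ∧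
      ∀ σ₀ : Matrix (Fin d) (Fin d) ℂ, σ₀.PosSemidef → σ₀.trace = 1 →
        ((∀ w : List Act,
            (LinearMap.range (w.foldl (fun ρ α => superOp (E α) ρ) σ₀).mulVecLin :
              Set (Fin d → ℂ)) ⊆ φ) ↔
          (LinearMap.range σ₀.mulVecLin : Set (Fin d → ℂ)) ⊆ ψ) := by
  set Φ := Set.range fun i => LinearMap.range (p i).mulVecLin
  have hΦ : Φ.Finite := Set.finite_range _
  have hφΦ (W : Submodule ℂ (Fin d → ℂ)) : (W : Set (Fin d → ℂ)) ⊆ φ ↔ W ∈ lowerClosure Φ := by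
    rw [hφ, ← Set.biUnion_range]
    exact Submodule.coe_subset_biUnion_iff_mem_lowerClosure hΦ
  obtain ⟨ψ, hψ, hsafe⟩ := exists_isFinUnionSubspaces_forall_iff antitone_isSafeUpTo
    (exists_finite_isSafeUpTo_iff (fun α => gc_krausImage (E α)) hΦ)
  refine ⟨ψ, hψ, fun σ₀ hσ₀ _ => ?_⟩
  simp only [range_foldl_superOp E _ hσ₀, hφΦ]
  rw [← hsafe, forall_isSafeUpTo_iff]

/-- For finitely many trace-preserving super-operators `E_α` and projections
`p_1, …, p_t` with `φ = range p_1 ∪ ⋯ ∪ range p_t`, there is a finite union of subspaces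
`ψ` such that for every density matrix `σ₀`: all states reachable from `σ₀` by words over
`Act` have support inside `φ` iff `supp σ₀ ⊆ ψ` (decidability of the invariant `□φ`). -/
theorem invariance_characterized_by_fin_union_subspaces
    {d : ℕ} {Act : Type} [Fintype Act] [Nonempty Act]
    {I : Act → Type} [∀ α, Fintype (I α)]
    (E : (α : Act) → I α → Matrix (Fin d) (Fin d) ℂ)
    (htp : ∀ α, ∑ i, (E α i)ᴴ * E α i = (1 : Matrix (Fin d) (Fin d) ℂ))
    {t : ℕ} (p : Fin t → Matrix (Fin d) (Fin d) ℂ)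
    (hp1 : ∀ i, (p i).IsHermitian) (hp2 : ∀ i, p i * p i = p i)
    (φ : Set (Fin d → ℂ))
    (hφ : φ = ⋃ i, (LinearMap.range (p i).mulVecLin : Set (Fin d → ℂ))) :
    ∃ ψ : Set (Fin d → ℂ), IsFinUnionSubspaces ψ ∧
      ∀ σ₀ : Matrix (Fin d) (Fin d) ℂ, σ₀.PosSemidef → σ₀.trace = 1 →
        ((∀ w : List Act,
            (LinearMap.range (w.foldl (fun ρ α => superOp (E α) ρ) σ₀).mulVecLin :
              Set (Fin d → ℂ)) ⊆ φ) ↔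
          (LinearMap.range σ₀.mulVecLin : Set (Fin d → ℂ)) ⊆ ψ) :=
  invariance_characterized_by_fin_union_subspaces_general E p φ hφ
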